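/- If K_{s_1}^{t_1} and K_{s_2}^{t_2} (with 2 ≤ t_i ≤ s_i and s_1+t_1 = s_2+t_2 = n) have equal distance spectra, then t_1 = t_2 and s_1 = s_2, i.e., the graphs are isomorphic. -/

import Mathlib

/-!
The spectrum of a real symmetric matrix `D` determines `tr (D²) = ∑ λᵢ²`. For the distance
matrix of `K_s^t` with `t ≤ s` this trace is `s² + 9t² + 8st - s - 15t`, which at `s = n - t`
equals `2t² + (6n - 14)t + n² - n`, strictly increasing in `t ≥ 0` once `n ≥ 3`.
-/

noncomputable def sortedEigenvalues {ι : Type*} [Fintype ι] [DecidableEq ι]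
    (A : Matrix ι ι ℝ) (hA : A.IsHermitian) : List ℝ :=
  (Finset.univ.val.map hA.eigenvalues).sort (· ≤ ·)

/-- `eig A hA k` is the `k`-th largest eigenvalue of `A` (1-indexed). -/
noncomputable def eig {ι : Type*} [Fintype ι] [DecidableEq ι]
    (A : Matrix ι ι ℝ) (hA : A.IsHermitian) (k : ℕ) : ℝ :=
  (sortedEigenvalues A hA)[Fintype.card ι - k]!
/-- The distance matrix of the graph `K_s^t`, obtained from the complete graph `K_s`
by attaching a pendant vertex at each of `t` of its vertices (`t ≤ s`).
Clique vertices are `Sum.inl`, pendant vertices are `Sum.inr`; the `i`-th pendant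
vertex is attached to the `i`-th clique vertex. -/
def DKst (s t : ℕ) : Matrix (Fin s ⊕ Fin t) (Fin s ⊕ Fin t) ℝ :=
  fun x y =>
    match x, y with
    | .inl a, .inl b => if a = b then 0 else 1
    | .inl a, .inr b => if (a : ℕ) = (b : ℕ) then 1 else 2
    | .inr a, .inl b => if (a : ℕ) = (b : ℕ) then 1 else 2
    | .inr a, .inr b => if a = b then 0 else 3

open Polynomial Matrix

theorem Fintype.sum_ite_eq_const {ι R : Type*} [Fintype ι] [DecidableEq ι] [Ring R]
    (j : ι) (a b : R) : ∑ i, (if i = j then a else b) = a + (Fintype.card ι - 1) * b := by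
  rw [Fintype.sum_eq_add_sum_compl j, if_pos rfl,
    Finset.sum_congr rfl fun i hi => if_neg (by simpa using hi)]
  simp [Finset.card_compl, Nat.cast_pred (Fintype.card_pos_iff.mpr ⟨j⟩)]

theorem Fintype.sum_ite_eq_const' {ι R : Type*} [Fintype ι] [DecidableEq ι] [Ring R]
    (j : ι) (a b : R) : ∑ i, (if j = i then a else b) = a + (Fintype.card ι - 1) * b := by
  simpa only [eq_comm] using Fintype.sum_ite_eq_const j a b

theorem Matrix.IsSymm.trace_mul_self {n R : Type*} [Fintype n] [CommSemiring R]
    {A : Matrix n n R} (hA : A.IsSymm) : (A * A).trace = ∑ i, ∑ j, A i j ^ 2 := by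
  simp only [trace, diag_apply, mul_apply, sq]
  refine Finset.sum_congr rfl fun i _ => Finset.sum_congr rfl fun j _ => ?_
  rw [hA.apply i j]

theorem Matrix.IsHermitian.trace_mul_self_eq_sum_sq_roots {n 𝕜 : Type*} [Fintype n]
    [DecidableEq n] [RCLike 𝕜] {A : Matrix n n 𝕜} (hA : A.IsHermitian) :
    (A * A).trace = (A.charpoly.roots.map (· ^ 2)).sum := by
  have hU := (mem_unitaryGroup_iff').mp hA.eigenvectorUnitary.2
  conv_lhs => rw [hA.spectral_theorem, ← map_mul, Unitary.conjStarAlgAut_apply, trace_mul_cycle,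
    hU, one_mul, diagonal_mul_diagonal, trace_diagonal]
  simp [hA.roots_charpoly_eq_eigenvalues, sq]

theorem DKst_isSymm (s t : ℕ) : (DKst s t).IsSymm := by
  ext x y
  cases x <;> cases y <;> simp [DKst, eq_comm]

theorem trace_DKst_mul_self {s t : ℕ} (h : t ≤ s) :
    (DKst s t * DKst s t).trace = (s : ℝ) ^ 2 + 9 * t ^ 2 + 8 * s * t - s - 15 * t := by
  have hattached : ∀ (a : Fin s) (b : Fin t), (a : ℕ) = b ↔ a = Fin.castLE h b := by
    simp [Fin.ext_iff]
  have hattached' : ∀ (a : Fin s) (b : Fin t), (b : ℕ) = a ↔ Fin.castLE h b = a := by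
    simp [Fin.ext_iff]
  rw [(DKst_isSymm s t).trace_mul_self]
  simp only [Fintype.sum_sum_type, DKst, hattached, hattached', ite_pow]
  rw [Finset.sum_add_distrib, Finset.sum_comm (γ := Fin s) (α := Fin t)]
  simp [Fintype.sum_ite_eq_const, Fintype.sum_ite_eq_const']
  ring

theorem Kst_determined_by_spectrum {n s₁ t₁ s₂ t₂ : ℕ}
    (ht₁ : 2 ≤ t₁) (hts₁ : t₁ ≤ s₁) (hts₂ : t₂ ≤ s₂)
    (hn₁ : s₁ + t₁ = n) (hn₂ : s₂ + t₂ = n)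
    (hspec : (DKst s₁ t₁).charpoly = (DKst s₂ t₂).charpoly) :
    t₁ = t₂ ∧ s₁ = s₂ := by
  have hherm (s t : ℕ) : (DKst s t).IsHermitian := isHermitian_iff_isSymm.mpr (DKst_isSymm s t)
  have htrace : (DKst s₁ t₁ * DKst s₁ t₁).trace = (DKst s₂ t₂ * DKst s₂ t₂).trace := by
    rw [(hherm _ _).trace_mul_self_eq_sum_sq_roots, (hherm _ _).trace_mul_self_eq_sum_sq_roots,
      hspec]
  rw [trace_DKst_mul_self hts₁, trace_DKst_mul_self hts₂] at htrace
  obtain rfl : s₁ = n - t₁ := by omega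
  obtain rfl : s₂ = n - t₂ := by omega
  have hn : (4 : ℝ) ≤ n := by exact_mod_cast (by omega : 4 ≤ n)
  push_cast [(by omega : t₁ ≤ n), (by omega : t₂ ≤ n)] at htrace
  have hfactor : ((t₁ : ℝ) - t₂) * (6 * n + 2 * (t₁ + t₂) - 14) = 0 := by
    linear_combination htrace
  have hpos : 6 * (n : ℝ) + 2 * (t₁ + t₂) - 14 ≠ 0 := by
    linarith [(t₁.cast_nonneg : (0 : ℝ) ≤ t₁), (t₂.cast_nonneg : (0 : ℝ) ≤ t₂)]
  have ht : t₁ = t₂ := by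
    exact_mod_cast sub_eq_zero.mp ((mul_eq_zero.mp hfactor).resolve_right hpos)
  exact ⟨ht, by rw [ht]⟩
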